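/- (Proposition 1, max-pooling case.) Let H, W ≥ 1 be integers and let (d_{ij}), 1 ≤ i ≤ H, 1 ≤ j ≤ W, be real-valued random variables on a probability space such that E[d_{ij}] = 0 for all i, j and a ≤ d_{ij} ≤ b almost surely, where a < b are real constants. Let γ > 0 and p ∈ [0, 1]. If (b − a) · sqrt( log( sqrt(2·H·W) ) ) / γ ≤ p, then P( | max_{i,j} d_{ij} | ≥ γ ) ≤ p. -/

import Mathlib

open MeasureTheory ProbabilityTheory Real
open scoped NNReal

/-! By Hoeffding's lemma each `d i j` is sub-Gaussian with variance proxy `((b - a) / 2) ^ 2`, so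
`P(|d i j| ≥ γ) ≤ 2 exp (-2 γ² / (b - a)²)`. A maximum over a finite family is attained, so
`|max d| ≥ γ` forces `|d i j| ≥ γ` for some `(i, j)`, and a union bound gives
`P(|max d| ≥ γ) ≤ 2 H W exp (-2 γ² / (b - a)²)`. The hypothesis on `p` makes this at most `p`:
it gives `2 γ² / (b - a)² ≥ log (2 H W) / p²`, and for `0 < p ≤ 1` and `N ≥ 2` one has
`log N (1 - 1 / p²) ≤ log p`. -/

namespace ProbabilityTheory

variable {Ω : Type*} [MeasurableSpace Ω] {μ : Measure Ω} {X : Ω → ℝ}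

lemma HasSubgaussianMGF.measureReal_abs_ge_le {c : ℝ≥0} (h : HasSubgaussianMGF X c μ) {ε : ℝ}
    (hε : 0 ≤ ε) : μ.real {ω | ε ≤ |X ω|} ≤ 2 * exp (-ε ^ 2 / (2 * c)) := by
  have hsplit : {ω | ε ≤ |X ω|} = {ω | ε ≤ X ω} ∪ {ω | ε ≤ (-X) ω} := by
    ext ω
    simp [le_abs]
  calc μ.real {ω | ε ≤ |X ω|}
      ≤ μ.real {ω | ε ≤ X ω} + μ.real {ω | ε ≤ (-X) ω} := hsplit ▸ measureReal_union_le _ _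
    _ ≤ exp (-ε ^ 2 / (2 * c)) + exp (-ε ^ 2 / (2 * c)) :=
        add_le_add (h.measure_ge_le hε) (h.neg.measure_ge_le hε)
    _ = 2 * exp (-ε ^ 2 / (2 * c)) := by ring

lemma measureReal_abs_ge_le_of_mem_Icc_of_integral_eq_zero [IsProbabilityMeasure μ] {a b ε : ℝ}
    (hm : AEMeasurable X μ) (hb : ∀ᵐ ω ∂μ, X ω ∈ Set.Icc a b) (hc : μ[X] = 0) (hε : 0 ≤ ε) :
    μ.real {ω | ε ≤ |X ω|} ≤ 2 * exp (-(2 * ε ^ 2 / (b - a) ^ 2)) := by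
  have hparam : -ε ^ 2 / (2 * ((‖b - a‖₊ / 2) ^ 2 : ℝ≥0) : ℝ) = -(2 * ε ^ 2 / (b - a) ^ 2) := by
    simp only [NNReal.coe_pow, NNReal.coe_div, coe_nnnorm, Real.norm_eq_abs, NNReal.coe_ofNat,
      div_pow, sq_abs]
    generalize (b - a) ^ 2 = D
    ring
  simpa only [hparam] using
    (hasSubgaussianMGF_of_mem_Icc_of_integral_eq_zero hm hb hc).measureReal_abs_ge_le hε

lemma measureReal_abs_iSup_ge_le_sum [IsFiniteMeasure μ] {ι : Type*} [Fintype ι] [Nonempty ι]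
    (Y : ι → Ω → ℝ) (ε : ℝ) :
    μ.real {ω | ε ≤ |⨆ i, Y i ω|} ≤ ∑ i, μ.real {ω | ε ≤ |Y i ω|} := by
  have hsub : {ω | ε ≤ |⨆ i, Y i ω|} ⊆ ⋃ i, {ω | ε ≤ |Y i ω|} := by
    intro ω hω
    obtain ⟨i, hi⟩ := exists_eq_ciSup_of_finite (f := fun i ↦ Y i ω)
    exact Set.mem_iUnion.mpr ⟨i, by simpa [hi] using hω⟩
  exact (measureReal_mono hsub).trans (measureReal_iUnion_fintype_le _)

end ProbabilityTheory

lemma Real.log_two_mul_sq_sub_one_le_sq_mul_log {p : ℝ} (hp0 : 0 < p) (hp1 : p ≤ 1) :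
    log 2 * (p ^ 2 - 1) ≤ p ^ 2 * log p := by
  have hlog : 1 - p⁻¹ ≤ log p := by
    have := log_le_sub_one_of_pos (inv_pos.mpr hp0)
    rw [log_inv] at this
    linarith
  have hmul : p ^ 2 - p ≤ p ^ 2 * log p := by
    calc p ^ 2 - p = p ^ 2 * (1 - p⁻¹) := by field_simp
      _ ≤ p ^ 2 * log p := by gcongr
  have hlog2 := log_two_gt_d9
  nlinarith [mul_nonneg (sub_nonneg.mpr hp1) (by nlinarith : 0 ≤ log 2 * (1 + p) - p)]

lemma Real.mul_exp_neg_le_of_mul_sqrt_log_sqrt_le {N κ p : ℝ} (hN : 2 ≤ N) (hκ : 0 < κ)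
    (hp1 : p ≤ 1) (h : κ * √(log √N) ≤ p) : N * exp (-(2 / κ ^ 2)) ≤ p := by
  have hlogN : log 2 ≤ log N := log_le_log two_pos hN
  have hlogN0 : 0 < log N := (log_pos one_lt_two).trans_le hlogN
  have hlogsqrt : log √N = log N / 2 := log_sqrt (by linarith)
  have hp0 : 0 < p := h.trans_lt' (by rw [hlogsqrt]; positivity)
  have hsq : κ ^ 2 * (log N / 2) ≤ p ^ 2 := by
    have := pow_le_pow_left₀ (by positivity) h 2
    rwa [mul_pow, sq_sqrt (by rw [hlogsqrt]; positivity), hlogsqrt] at this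
  have hexp : log N - 2 / κ ^ 2 ≤ log p := by
    have hκp : log N ≤ 2 * p ^ 2 / κ ^ 2 := by
      rw [le_div_iff₀ (by positivity)]
      linarith
    have : p ^ 2 * (log N - 2 / κ ^ 2) ≤ p ^ 2 * log p := by
      calc p ^ 2 * (log N - 2 / κ ^ 2) = p ^ 2 * log N - 2 * p ^ 2 / κ ^ 2 := by ring
        _ ≤ log N * (p ^ 2 - 1) := by linarith
        _ ≤ log 2 * (p ^ 2 - 1) := by
            nlinarith [mul_nonneg (sub_nonneg.mpr hlogN) (sub_nonneg.mpr (pow_le_one₀ (n := 2) hp0.le hp1))]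
        _ ≤ p ^ 2 * log p := log_two_mul_sq_sub_one_le_sq_mul_log hp0 hp1
    exact le_of_mul_le_mul_left this (by positivity)
  calc N * exp (-(2 / κ ^ 2)) = exp (log N - 2 / κ ^ 2) := by
        rw [exp_sub, exp_log (by linarith), exp_neg, ← div_eq_mul_inv]
    _ ≤ exp (log p) := exp_le_exp.mpr hexp
    _ = p := exp_log hp0

theorem max_pooling_perturbation_bound_general
    {Ω : Type*} [MeasurableSpace Ω] (μ : Measure Ω) [IsProbabilityMeasure μ]
    (H W : ℕ) (hH : 1 ≤ H) (hW : 1 ≤ W)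
    (d : Fin H → Fin W → Ω → ℝ)
    (hmeas : ∀ i j, Measurable (d i j))
    (hmean : ∀ i j, ∫ ω, d i j ω ∂μ = 0)
    (a b : ℝ) (hab : a < b)
    (hbound : ∀ i j, ∀ᵐ ω ∂μ, a ≤ d i j ω ∧ d i j ω ≤ b)
    (γ : ℝ) (hγ : 0 < γ) (p : ℝ) (hp1 : p ≤ 1)
    (hcond : (b - a) * Real.sqrt (Real.log (Real.sqrt (2 * H * W))) / γ ≤ p) :
    μ {ω | γ ≤ |⨆ i : Fin H, ⨆ j : Fin W, d i j ω|} ≤ ENNReal.ofReal p := by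
  have : Nonempty (Fin H) := ⟨⟨0, hH⟩⟩
  have : Nonempty (Fin W) := ⟨⟨0, hW⟩⟩
  have htail : ∀ i j, μ.real {ω | γ ≤ |d i j ω|} ≤ 2 * exp (-(2 * γ ^ 2 / (b - a) ^ 2)) :=
    fun i j ↦ measureReal_abs_ge_le_of_mem_Icc_of_integral_eq_zero (hmeas i j).aemeasurable
      (hbound i j) (hmean i j) hγ.le
  have hN : (2 : ℝ) ≤ 2 * H * W := by
    have : (1 : ℝ) ≤ H * W := one_le_mul_of_one_le_of_one_le (by exact_mod_cast hH)
      (by exact_mod_cast hW)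
    linarith
  have hsum : 2 * H * W * exp (-(2 / ((b - a) / γ) ^ 2)) ≤ p :=
    mul_exp_neg_le_of_mul_sqrt_log_sqrt_le hN (div_pos (sub_pos.mpr hab) hγ) hp1
      (by rwa [← mul_div_right_comm])
  rw [div_pow, div_div_eq_mul_div] at hsum
  rw [← ofReal_measureReal]
  refine ENNReal.ofReal_le_ofReal ?_
  calc μ.real {ω | γ ≤ |⨆ i : Fin H, ⨆ j : Fin W, d i j ω|}
      ≤ ∑ i, μ.real {ω | γ ≤ |⨆ j : Fin W, d i j ω|} := measureReal_abs_iSup_ge_le_sum _ _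
    _ ≤ ∑ i, ∑ j, μ.real {ω | γ ≤ |d i j ω|} :=
        Finset.sum_le_sum fun i _ ↦ measureReal_abs_iSup_ge_le_sum _ _
    _ ≤ ∑ _i : Fin H, ∑ _j : Fin W, 2 * exp (-(2 * γ ^ 2 / (b - a) ^ 2)) := by
        gcongr with i _ j _
        exact htail i j
    _ = 2 * H * W * exp (-(2 * γ ^ 2 / (b - a) ^ 2)) := by
        simp only [Finset.sum_const, Finset.card_univ, Fintype.card_fin, nsmul_eq_mul]
        ring
    _ ≤ p := hsum

/-- Proposition 1, max-pooling case: if `(b-a) sqrt(log(sqrt(2HW))) / γ ≤ p`,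
then the probability that the max-pooled disturbance `|max_{i,j} d i j|`
exceeds `γ` is at most `p`. -/
theorem max_pooling_perturbation_bound
    {Ω : Type*} [MeasurableSpace Ω] (μ : Measure Ω) [IsProbabilityMeasure μ]
    (H W : ℕ) (hH : 1 ≤ H) (hW : 1 ≤ W)
    (d : Fin H → Fin W → Ω → ℝ)
    (hmeas : ∀ i j, Measurable (d i j))
    (hmean : ∀ i j, ∫ ω, d i j ω ∂μ = 0)
    (a b : ℝ) (hab : a < b)
    (hbound : ∀ i j, ∀ᵐ ω ∂μ, a ≤ d i j ω ∧ d i j ω ≤ b)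
    (γ : ℝ) (hγ : 0 < γ) (p : ℝ) (hp0 : 0 ≤ p) (hp1 : p ≤ 1)
    (hcond : (b - a) * Real.sqrt (Real.log (Real.sqrt (2 * H * W))) / γ ≤ p) :
    μ {ω | γ ≤ |⨆ i : Fin H, ⨆ j : Fin W, d i j ω|} ≤ ENNReal.ofReal p :=
  max_pooling_perturbation_bound_general μ H W hH hW d hmeas hmean a b hab hbound γ hγ p hp1 hcond
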